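/- Let X, Y be Banach spaces with X compactly embedded in Y. Suppose B ∈ C_w([0,∞); L²(Ω)) (weakly continuous in time with values in L²) and A(t) is defined for each t as a vector potential of B(t) via a fixed bounded linear right inverse of curl, A = K(B), where K : L²(Ω) → H¹(Ω) is bounded linear. If moreover ∂_t B is bounded in L¹_loc(0,∞; (H¹_σ)*) then t ↦ A(t) belongs to C([0,∞); L²(Ω)) (strongly continuous), and consequently any quantity of the form t ↦ ∫_Ω (A(t) + A')·(B(t) − B') dx that is constant for a.e. t is constant for all t. -/

import Mathlib

/-!
A bounded set is mapped by the compact operator `ι ∘ K` into a compact set, on which the weak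
topology of the Hilbert space agrees with the norm topology; since `t ↦ ι (K (B t))` is weakly
continuous (through the adjoint of `ι ∘ K`), it is therefore strongly continuous. Pairing a
strongly continuous curve with a bounded weakly continuous one gives a continuous function, and
a continuous function that is a.e. constant on `[0, ∞)` is constant there.
-/

open MeasureTheory Set Filter Topology

open scoped InnerProductSpace

section WeakToStrong

variable {X E : Type*} [TopologicalSpace X] [NormedAddCommGroup E] [InnerProductSpace ℝ E]
  {s : Set X}

theorem continuousOn_of_continuousOn_inner_of_isCompact {f : X → E} {C : Set E}
    (hC : IsCompact C) (hfC : MapsTo f s C) (hf : ∀ w, ContinuousOn (fun x => ⟪f x, w⟫_ℝ) s) :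
    ContinuousOn f s := by
  intro x hx
  refine hC.tendsto_nhds_of_unique_mapClusterPt
    (mem_of_superset self_mem_nhdsWithin hfC) fun z _ hz => ext_inner_right ℝ fun w => ?_
  have hzw : MapClusterPt ⟪z, w⟫_ℝ (𝓝[s] x) (fun y => ⟪f y, w⟫_ℝ) :=
    hz.tendsto_comp ((continuous_id.inner continuous_const).tendsto z)
  exact eq_of_nhds_neBot (hzw.clusterPt.mono (hf w x hx))

theorem ContinuousOn.inner_of_continuousOn_inner {a b : X → E} {M : ℝ} (ha : ContinuousOn a s)
    (hb : ∀ w, ContinuousOn (fun x => ⟪b x, w⟫_ℝ) s) (hbM : ∀ x ∈ s, ‖b x‖ ≤ M) :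
    ContinuousOn (fun x => ⟪a x, b x⟫_ℝ) s := by
  intro x hx
  have hsplit : ∀ y, ⟪a y, b y⟫_ℝ = ⟪a y - a x, b y⟫_ℝ + ⟪b y, a x⟫_ℝ := fun y => by
    rw [inner_sub_left, real_inner_comm (a x)]; ring
  have hsmall : Tendsto (fun y => ⟪a y - a x, b y⟫_ℝ) (𝓝[s] x) (𝓝 0) := by
    refine squeeze_zero_norm' (a := fun y => ‖a y - a x‖ * M) ?_ ?_
    · filter_upwards [self_mem_nhdsWithin] with y hy
      exact (norm_inner_le_norm _ _).trans (mul_le_mul_of_nonneg_left (hbM y hy) (norm_nonneg _))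
    · simpa using ((tendsto_iff_norm_sub_tendsto_zero.mp (ha x hx)).mul_const M)
  simpa [ContinuousWithinAt, hsplit] using hsmall.add (hb (a x) x hx)

end WeakToStrong

theorem stmt_14_general {L2 H1 : Type*}
    [NormedAddCommGroup L2] [InnerProductSpace ℝ L2] [CompleteSpace L2]
    [NormedAddCommGroup H1] [NormedSpace ℝ H1]
    (ι : H1 →L[ℝ] L2) (hcomp : IsCompactOperator ι)
    (K : L2 →L[ℝ] H1)
    (B : ℝ → L2) (M : ℝ) (hbd : ∀ t : ℝ, 0 ≤ t → ‖B t‖ ≤ M)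
    (hweakcont : ∀ w : L2, ContinuousOn (fun t => (inner ℝ (B t) w : ℝ)) (Ici 0)) :
    ContinuousOn (fun t => ι (K (B t))) (Ici 0) ∧
    ∀ (A' B' : L2) (cst : ℝ),
      (∀ᵐ t ∂(volume.restrict (Ici (0:ℝ))),
        (inner ℝ (ι (K (B t)) + A') (B t - B') : ℝ) = cst) →
      ∀ t : ℝ, 0 ≤ t → (inner ℝ (ι (K (B t)) + A') (B t - B') : ℝ) = cst := by
  set T := ι.comp K
  have hA : ContinuousOn (fun t => T (B t)) (Ici 0) := by
    refine continuousOn_of_continuousOn_inner_of_isCompact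
      ((hcomp.comp_clm K).isCompact_closure_image_closedBall M)
      (fun t ht => subset_closure (mem_image_of_mem T (mem_closedBall_zero_iff.mpr (hbd t ht))))
      fun w => ?_
    simpa only [ContinuousLinearMap.adjoint_inner_right] using hweakcont (T.adjoint w)
  refine ⟨hA, fun A' B' cst hae t ht => ?_⟩
  have hB' : ∀ w, ContinuousOn (fun t => ⟪B t - B', w⟫_ℝ) (Ici 0) := fun w => by
    simp_rw [inner_sub_left]
    exact (hweakcont w).sub continuousOn_const
  have hf : ContinuousOn (fun t => ⟪T (B t) + A', B t - B'⟫_ℝ) (Ici 0) :=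
    (hA.add continuousOn_const).inner_of_continuousOn_inner hB'
      fun s hs => (norm_sub_le _ _).trans (add_le_add_left (hbd s hs) _)
  refine Measure.eqOn_of_ae_eq hae hf continuousOn_const ?_ ht
  rw [interior_Ici, closure_Ioi]

/-- Abstract Aubin–Lions upgrade: `H1` is compactly embedded in the
Hilbert space `L2` via `ι`, `B : [0,∞) → L2` is bounded and weakly continuous, the
vector potential is `A = ι(K(B))` for a bounded linear (Biot–Savart-type right inverse
of curl) `K : L2 → H1`, and `∂ₜB` is bounded in `L¹_loc` with values in the dual of
`H1` (expressed by the integral oscillation bound with locally integrable `g`). Then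
`t ↦ A(t)` is strongly continuous in `L2`, and consequently any helicity-type quantity
`t ↦ ⟨A(t) + A', B(t) - B'⟩` that is constant for a.e. `t ≥ 0` is constant for all
`t ≥ 0`. -/
theorem stmt_14 {L2 H1 : Type*}
    [NormedAddCommGroup L2] [InnerProductSpace ℝ L2] [CompleteSpace L2]
    [NormedAddCommGroup H1] [NormedSpace ℝ H1]
    (ι : H1 →L[ℝ] L2) (hcomp : IsCompactOperator ι) (hdense : DenseRange ι)
    (K : L2 →L[ℝ] H1)
    (B : ℝ → L2) (M : ℝ) (hbd : ∀ t : ℝ, 0 ≤ t → ‖B t‖ ≤ M)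
    (hweakcont : ∀ w : L2, ContinuousOn (fun t => (inner ℝ (B t) w : ℝ)) (Ici 0))
    (g : ℝ → ℝ) (hg0 : ∀ τ, 0 ≤ g τ)
    (hgloc : ∀ T : ℝ, 0 < T → IntegrableOn g (Icc 0 T))
    (hdB : ∀ φ : H1, ∀ s t : ℝ, 0 ≤ s → s ≤ t →
      |(inner ℝ (B t - B s) (ι φ) : ℝ)| ≤ ‖φ‖ * ∫ τ in Icc s t, g τ) :
    ContinuousOn (fun t => ι (K (B t))) (Ici 0) ∧
    ∀ (A' B' : L2) (cst : ℝ),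
      (∀ᵐ t ∂(volume.restrict (Ici (0:ℝ))),
        (inner ℝ (ι (K (B t)) + A') (B t - B') : ℝ) = cst) →
      ∀ t : ℝ, 0 ≤ t → (inner ℝ (ι (K (B t)) + A') (B t - B') : ℝ) = cst :=
  stmt_14_general ι hcomp K B M hbd hweakcont
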